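/- Let k, t, n be integers with k ≥ 2, 1 ≤ t ≤ k−1, and 2kn ≥ (2k²+5k+1)t + k²+5k+2. Then C(n − ⌊(2k+1)(t+1)/2⌋ − 1, 2) + (t+1)·(⌊(2k+1)(t+1)/2⌋ + 1) ≤ C(n − ⌊(2k+1)t/2⌋ − 1, 2) + t·(⌊(2k+1)t/2⌋ + 1), with strict inequality when t is odd, where C(m,2) = m(m−1)/2. -/
import Mathlib

def C2 (m : ℤ) : ℤ := m * (m - 1) / 2

lemma C2_two (m : ℤ) : 2 * C2 m = m * (m - 1) := by
  have h : Even (m * (m - 1)) := by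
    have := Int.even_mul_succ_self (m - 1)
    simpa [mul_comm] using this
  obtain ⟨c, hc⟩ := h
  simp [C2, hc]; ring_nf; omega

lemma floorq (a : ℤ) : ⌊(a : ℚ) / 2⌋ = a / 2 := by
  have := Rat.floor_intCast_div_natCast a 2
  simpa using this

/-- Subcase `s = t+1` of Cases 3 and 4 in the proof of Theorem 1.3: for integers `k ≥ 2`,
`1 ≤ t ≤ k−1` and `2kn ≥ (2k²+5k+1)t + k²+5k+2`, one has
`C(n − ⌊(2k+1)(t+1)/2⌋ − 1, 2) + (t+1)(⌊(2k+1)(t+1)/2⌋ + 1)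
  ≤ C(n − ⌊(2k+1)t/2⌋ − 1, 2) + t(⌊(2k+1)t/2⌋ + 1)`,
with strict inequality when `t` is odd. -/
theorem stmt13 (k t n : ℤ) (hk : 2 ≤ k) (ht1 : 1 ≤ t) (htk : t ≤ k - 1)
    (hn : (2 * k ^ 2 + 5 * k + 1) * t + k ^ 2 + 5 * k + 2 ≤ 2 * k * n) :
    (C2 (n - ⌊((2 * k + 1) * (t + 1) : ℚ) / 2⌋ - 1)
        + (t + 1) * (⌊((2 * k + 1) * (t + 1) : ℚ) / 2⌋ + 1)
      ≤ C2 (n - ⌊((2 * k + 1) * t : ℚ) / 2⌋ - 1) + t * (⌊((2 * k + 1) * t : ℚ) / 2⌋ + 1))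
    ∧ (Odd t →
      C2 (n - ⌊((2 * k + 1) * (t + 1) : ℚ) / 2⌋ - 1)
          + (t + 1) * (⌊((2 * k + 1) * (t + 1) : ℚ) / 2⌋ + 1)
        < C2 (n - ⌊((2 * k + 1) * t : ℚ) / 2⌋ - 1) + t * (⌊((2 * k + 1) * t : ℚ) / 2⌋ + 1)) := by
  have e1 : ((2 * k + 1) * (t + 1) : ℚ) = (((2 * k + 1) * (t + 1) : ℤ) : ℚ) := by push_cast; ring
  have e2 : ((2 * k + 1) * t : ℚ) = (((2 * k + 1) * t : ℤ) : ℚ) := by push_cast; ring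
  rw [e1, e2, floorq, floorq]
  rcases Int.even_or_odd t with ⟨m, hm⟩ | ⟨m, hm⟩
  · subst hm
    have f1 : ((2 * k + 1) * (m + m + 1)) / 2 = (2 * k + 1) * m + k := by
      have : (2 * k + 1) * (m + m + 1) = 2 * ((2 * k + 1) * m + k) + 1 := by ring
      omega
    have f2 : ((2 * k + 1) * (m + m)) / 2 = (2 * k + 1) * m := by
      have : (2 * k + 1) * (m + m) = 2 * ((2 * k + 1) * m) := by ring
      omega
    rw [f1, f2]
    have hA := C2_two (n - ((2 * k + 1) * m + k) - 1)
    have hB := C2_two (n - (2 * k + 1) * m - 1)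
    constructor
    · nlinarith [sq_nonneg (k - m), sq_nonneg m, sq_nonneg k]
    · intro ⟨c, hc⟩; omega
  · subst hm
    have f1 : ((2 * k + 1) * (2 * m + 1 + 1)) / 2 = (2 * k + 1) * (m + 1) := by
      have : (2 * k + 1) * (2 * m + 1 + 1) = 2 * ((2 * k + 1) * (m + 1)) := by ring
      omega
    have f2 : ((2 * k + 1) * (2 * m + 1)) / 2 = (2 * k + 1) * m + k := by
      have : (2 * k + 1) * (2 * m + 1) = 2 * ((2 * k + 1) * m + k) + 1 := by ring
      omega
    rw [f1, f2]
    have hA := C2_two (n - (2 * k + 1) * (m + 1) - 1)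
    have hB := C2_two (n - ((2 * k + 1) * m + k) - 1)
    have key : C2 (n - (2 * k + 1) * (m + 1) - 1) + (2 * m + 1 + 1) * ((2 * k + 1) * (m + 1) + 1)
        < C2 (n - ((2 * k + 1) * m + k) - 1) + (2 * m + 1) * ((2 * k + 1) * m + k + 1) := by
      nlinarith [sq_nonneg (k - m), sq_nonneg m, sq_nonneg k]
    exact ⟨le_of_lt key, fun _ => key⟩
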